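/- arXiv:2506.18370 — 2 statements merged into one kernel-verified Lean document; each statement's English description precedes it below -/
import Mathlib

section
/- Let ψ ∈ 𝒦 with Khinchin family (Y_t), and let q(t) be the extinction probability of the Galton–Watson process with offspring distribution Y_t. Then for all t ∈ (0,R_ψ): q(t) = Σ_{n≥1} A_n t^{n-1}/ψ(t)^n = g(t/ψ(t))/t, where g(z) = Σ A_n z^n solves g(z) = zψ(g(z)). -/
open Set Filter Topology

/-- The function defined by the power series with coefficients `b`. -/
noncomputable def psi (b : ℕ → ℝ) (t : ℝ) : ℝ := ∑' n, b n * t ^ n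

/-- The mean function of the Khinchin family of `psi b`. -/
noncomputable def mean (b : ℕ → ℝ) (t : ℝ) : ℝ := t * deriv (psi b) t / psi b t

/-- Coefficients of the solution of Lagrange's equation `g(z) = z ψ(g(z))`,
given by Lagrange's inversion formula. -/
noncomputable def lagA (b : ℕ → ℝ) : ℕ → ℝ := fun n =>
  if n = 0 then 0 else (n : ℝ)⁻¹ * PowerSeries.coeff (R := ℝ) (n - 1) ((PowerSeries.mk b) ^ n)

/-- The solution `g` of Lagrange's equation with data `ψ`, as a function. -/
noncomputable def lagG (b : ℕ → ℝ) (z : ℝ) : ℝ := ∑' n, lagA b n * z ^ n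

/-- Extinction probability of the Galton–Watson process with offspring
distribution `Y_t`: the smallest nonnegative fixed point of the offspring
probability generating function `ψ_t(x) = ψ(tx)/ψ(t)`. -/
noncomputable def extq (b : ℕ → ℝ) (t : ℝ) : ℝ :=
  sInf {x : ℝ | 0 ≤ x ∧ psi b (t * x) = x * psi b t}

/-!
The Lagrange series `g = ∑ Aₙ zⁿ` is the compositional inverse of `z / ψ(z)`, so `g = z ψ(g)` as
formal power series; Lagrange inversion `n [zⁿ] gᵐ = m [zⁿ⁻ᵐ] ψⁿ`, proved by induction on `n - m`
from `n (ψᵐ)' ψⁿ⁻ᵐ = m (ψⁿ)'`, identifies its coefficients with the `Aₙ`.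

With `w = t / ψ(t)`, the fixed points `x` of the offspring generating function `ψ(t x) / ψ(t)` are
exactly the solutions `y = t x` of `y = w ψ(y)`. All coefficients being nonnegative, the truncation
`g_N` of `g` below degree `N` satisfies `g_{N+1}(w) ≤ w ψ(g_N(w))`, so every `y ≥ 0` with
`w ψ(y) ≤ y` bounds all partial sums of `g(w)`. Hence `g(w)` converges, lies below `t x` for every
fixed point `x ≤ 1`, and is itself a solution, by evaluating `g = z ψ(g)` at `w` (absolute
convergence justifies the rearrangement). So `q(t) = g(w) / t`.
-/

open PowerSeries Finset

theorem hasSum_sum_antidiagonal_mul_of_nonneg {f g : ℕ → ℝ} {s t : ℝ} (hf0 : ∀ n, 0 ≤ f n)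
    (hg0 : ∀ n, 0 ≤ g n) (hf : HasSum f s) (hg : HasSum g t) :
    HasSum (fun n => ∑ p ∈ antidiagonal n, f p.1 * g p.2) (s * t) := by
  have hf' : Summable fun n => ‖f n‖ := by simpa [Real.norm_of_nonneg (hf0 _)] using hf.summable
  have hg' : Summable fun n => ‖g n‖ := by simpa [Real.norm_of_nonneg (hg0 _)] using hg.summable
  rw [← hf.tsum_eq, ← hg.tsum_eq, tsum_mul_tsum_eq_tsum_sum_antidiagonal_of_summable_norm hf' hg']
  exact (summable_norm_sum_mul_antidiagonal_of_summable_norm hf' hg').of_norm.hasSum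

namespace PowerSeries

section Subst

variable {R : Type*} [CommRing R]

theorem coeff_pow_eq_zero_of_lt {φ : R⟦X⟧} (hφ : constantCoeff φ = 0) {n j : ℕ} (h : n < j) :
    coeff n (φ ^ j) = 0 :=
  coeff_of_lt_order _ ((Nat.cast_lt.2 h).trans_le (le_order_pow_of_constantCoeff_eq_zero j hφ))

theorem coeff_subst_eq_sum_range {φ : R⟦X⟧} (hφ : constantCoeff φ = 0) (F : R⟦X⟧) (n : ℕ) :
    coeff n (F.subst φ) = ∑ j ∈ range (n + 1), coeff j F * coeff n (φ ^ j) := by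
  rw [coeff_subst' (HasSubst.of_constantCoeff_zero' hφ)]
  refine finsum_eq_sum_of_support_subset _ fun j hj => ?_
  by_contra hjn
  simp only [coe_range, Set.mem_Iio, not_lt] at hjn
  exact hj (by simp only [coeff_pow_eq_zero_of_lt hφ (Nat.lt_of_succ_le hjn), smul_zero])

theorem coeff_subst_trunc {φ : R⟦X⟧} (hφ : constantCoeff φ = 0) (F : R⟦X⟧) {n N : ℕ}
    (hn : n < N) : coeff n (F.subst (trunc N φ : R⟦X⟧)) = coeff n (F.subst φ) := by
  have htrunc : constantCoeff (trunc N φ : R⟦X⟧) = 0 := by simp [coeff_trunc, hφ]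
  rw [coeff_subst_eq_sum_range hφ, coeff_subst_eq_sum_range htrunc]
  refine sum_congr rfl fun j _ => ?_
  have hpow : ∀ ψ : R⟦X⟧, coeff n ψ = (trunc N ψ).coeff n := fun ψ => by
    rw [coeff_trunc, if_pos hn]
  rw [hpow (φ ^ j), hpow (_ ^ j), trunc_trunc_pow]

theorem coeff_X_mul_subst_trunc {F G : R⟦X⟧} (hG : G = X * F.subst G) {n N : ℕ} (hn : n ≤ N) :
    coeff n (X * F.subst (trunc N G : R⟦X⟧)) = coeff n G := by
  have hG0 : constantCoeff G = 0 := by rw [hG]; simp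
  rcases n with _ | k
  · simp [hG0]
  · conv_rhs => rw [hG]
    rw [coeff_succ_X_mul, coeff_succ_X_mul, coeff_subst_trunc hG0 F hn]

end Subst

section Nonneg

variable {R : Type*} [CommRing R] [PartialOrder R] [IsOrderedRing R]

theorem coeff_pow_nonneg {φ : R⟦X⟧} (hφ : ∀ n, 0 ≤ coeff n φ) (j n : ℕ) :
    0 ≤ coeff n (φ ^ j) := by
  induction j generalizing n with
  | zero => rw [pow_zero, coeff_one]; split_ifs <;> simp
  | succ j ih =>
    rw [pow_succ, coeff_mul]
    exact sum_nonneg fun p _ => mul_nonneg (ih p.1) (hφ p.2)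

theorem coeff_subst_nonneg {F φ : R⟦X⟧} (hF : ∀ n, 0 ≤ coeff n F) (hφ0 : constantCoeff φ = 0)
    (hφ : ∀ n, 0 ≤ coeff n φ) (n : ℕ) : 0 ≤ coeff n (F.subst φ) := by
  rw [coeff_subst_eq_sum_range hφ0]
  exact sum_nonneg fun j _ => mul_nonneg (hF j) (coeff_pow_nonneg hφ j n)

end Nonneg

section Lagrange

variable {R : Type*} [CommRing R]

theorem coeff_derivative_mul (f g : R⟦X⟧) (k : ℕ) :
    coeff k (derivative R f * g) =
      ∑ p ∈ antidiagonal (k + 1), (p.1 : R) * coeff p.1 f * coeff p.2 g := by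
  rw [Nat.sum_antidiagonal_succ, coeff_mul]
  simp only [coeff_derivative, Nat.cast_zero, zero_mul, zero_add, Nat.cast_succ]
  exact sum_congr rfl fun p _ => by ring

theorem nsmul_derivative_pow_mul_pow (F : R⟦X⟧) {m : ℕ} (hm : 1 ≤ m) (l : ℕ) :
    (m + l) • (derivative R (F ^ m) * F ^ l) = m • derivative R (F ^ (m + l)) := by
  obtain ⟨m, rfl⟩ := Nat.exists_eq_add_of_le' hm
  rw [derivative_pow, derivative_pow, show m + 1 + l - 1 = m + l by omega, Nat.add_sub_cancel,
    pow_add F m l, nsmul_eq_mul, nsmul_eq_mul]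
  push_cast
  ring

variable {K : Type*} [Field K]

theorem exists_eq_X_mul_subst {F : K⟦X⟧} (hF : constantCoeff F ≠ 0) :
    ∃ G : K⟦X⟧, G = X * F.subst G := by
  set P : K⟦X⟧ := X * F⁻¹
  have hP : constantCoeff P = 0 := by simp [P]
  have hP' : IsUnit (coeff 1 P) := by simpa [P, coeff_succ_X_mul] using hF
  set G := P.substInvOfIsUnit hP'
  have hG : HasSubst G := HasSubst.of_constantCoeff_zero' (constantCoeff_substInvOfIsUnit P hP')
  have hPG : G * F⁻¹.subst G = X := by
    have := subst_substInvOfIsUnit_right P hP hP'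
    rwa [subst_mul hG, subst_X hG] at this
  have hFG : F.subst G * F⁻¹.subst G = 1 := by
    rw [← subst_mul hG, PowerSeries.mul_inv_cancel F hF, ← coe_substAlgHom hG, map_one]
  refine ⟨G, ?_⟩
  calc G = G * F⁻¹.subst G * F.subst G := by rw [mul_assoc, mul_comm (F⁻¹.subst G), hFG, mul_one]
    _ = X * F.subst G := by rw [hPG]

theorem lagrange_inversion_coeff_pow [CharZero K] {F G : K⟦X⟧} (hG : G = X * F.subst G) (l : ℕ)
    {m : ℕ} (hm : 1 ≤ m) :
    ((m + l : ℕ) : K) * coeff (m + l) (G ^ m) = m * coeff l (F ^ (m + l)) := by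
  induction l using Nat.strong_induction_on generalizing m with | _ l ih =>
  have hG0 : constantCoeff G = 0 := by rw [hG]; simp
  have hGm : G ^ m = X ^ m * (F ^ m).subst G := by
    rw [subst_pow (HasSubst.of_constantCoeff_zero' hG0), ← mul_pow, ← hG]
  rw [hGm, coeff_X_pow_mul', if_pos (Nat.le_add_right m l), Nat.add_sub_cancel_left,
    coeff_subst_eq_sum_range hG0]
  rcases l with _ | k
  · simp
  have hkey : ((k + 1 : ℕ) : K) * ∑ j ∈ range (k + 1 + 1), coeff j (F ^ m) * coeff (k + 1) (G ^ j)
      = coeff k (derivative K (F ^ m) * F ^ (k + 1)) := by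
    rw [coeff_derivative_mul, Nat.sum_antidiagonal_eq_sum_range_succ
      (fun i j => (i : K) * coeff i (F ^ m) * coeff j (F ^ (k + 1))), mul_sum]
    refine sum_congr rfl fun j hj => ?_
    rcases Nat.eq_zero_or_pos j with rfl | hj0
    · simp [coeff_one]
    have hjk : j + (k + 1 - j) = k + 1 := by simp only [Finset.mem_range] at hj; omega
    have hIH := ih (k + 1 - j) (by omega) hj0
    rw [hjk] at hIH
    linear_combination coeff j (F ^ m) * hIH
  have hcoeff := congrArg (coeff k) (nsmul_derivative_pow_mul_pow F hm (k + 1))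
  rw [map_nsmul, map_nsmul, nsmul_eq_mul, nsmul_eq_mul, ← hkey, coeff_derivative] at hcoeff
  have hk : ((k + 1 : ℕ) : K) ≠ 0 := Nat.cast_ne_zero.2 k.succ_ne_zero
  apply mul_left_cancel₀ hk
  push_cast at hcoeff ⊢
  linear_combination hcoeff

end Lagrange

section Evaluation

variable {w : ℝ}

theorem hasSum_coeff_pow_mul_pow {φ : ℝ⟦X⟧} (hφ : ∀ n, 0 ≤ coeff n φ) (hw : 0 ≤ w) {e : ℝ}
    (he : HasSum (fun n => coeff n φ * w ^ n) e) (j : ℕ) :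
    HasSum (fun n => coeff n (φ ^ j) * w ^ n) (e ^ j) := by
  induction j with
  | zero =>
    simp only [pow_zero]
    convert hasSum_ite_eq (0 : ℕ) (1 : ℝ) using 2 with n
    split_ifs with hn <;> simp [coeff_one, hn]
  | succ j ih =>
    convert hasSum_sum_antidiagonal_mul_of_nonneg
      (fun n => mul_nonneg (coeff_pow_nonneg hφ j n) (pow_nonneg hw n))
      (fun n => mul_nonneg (hφ n) (pow_nonneg hw n)) ih he using 1
    · ext n
      rw [pow_succ, coeff_mul, sum_mul]
      refine sum_congr rfl fun p hp => ?_
      rw [← mem_antidiagonal.1 hp, pow_add]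
      ring
    · rw [pow_succ]

theorem hasSum_coeff_subst_mul_pow {b : ℕ → ℝ} (hb : ∀ n, 0 ≤ b n) {φ : ℝ⟦X⟧}
    (hφ0 : constantCoeff φ = 0) (hφ : ∀ n, 0 ≤ coeff n φ) (hw : 0 ≤ w) {e : ℝ}
    (he : HasSum (fun n => coeff n φ * w ^ n) e) (hψ : Summable fun n => b n * e ^ n) :
    HasSum (fun n => coeff n ((mk b).subst φ) * w ^ n) (psi b e) := by
  set f : ℕ × ℕ → ℝ := fun p => b p.1 * (coeff p.2 (φ ^ p.1) * w ^ p.2)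
  have hrow : ∀ j, HasSum (fun n => f (j, n)) (b j * e ^ j) := fun j =>
    (hasSum_coeff_pow_mul_pow hφ hw he j).mul_left (b j)
  have hf : Summable f := by
    refine (summable_prod_of_nonneg fun p => ?_).2 ⟨fun j => (hrow j).summable, ?_⟩
    · exact mul_nonneg (hb _) (mul_nonneg (coeff_pow_nonneg hφ _ _) (pow_nonneg hw _))
    · simpa only [(hrow _).tsum_eq] using hψ
  have htotal : ∑' p, f p = psi b e :=
    (hf.hasSum.prod_fiberwise hrow).unique hψ.hasSum
  rw [← htotal]
  refine ((Equiv.prodComm ℕ ℕ).hasSum_iff.2 hf.hasSum).prod_fiberwise fun n => ?_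
  have hcol : ∀ j ∈ range (n + 1), coeff j (mk b) * coeff n (φ ^ j) * w ^ n = f (j, n) :=
    fun j _ => by simp only [f, coeff_mk, mul_assoc]
  rw [coeff_subst_eq_sum_range hφ0, sum_mul, sum_congr rfl hcol]
  exact hasSum_sum_of_ne_finset_zero fun j hj => by
    simp [f, coeff_pow_eq_zero_of_lt hφ0 (by simpa using hj)]

theorem hasSum_coeff_X_mul_mul_pow {F : ℝ⟦X⟧} {v : ℝ} (h : HasSum (fun n => coeff n F * w ^ n) v) :
    HasSum (fun n => coeff n (X * F) * w ^ n) (w * v) := by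
  rw [← hasSum_nat_add_iff' 1]
  simpa [coeff_succ_X_mul, pow_succ, mul_left_comm, mul_comm, mul_assoc] using h.mul_left w

end Evaluation

end PowerSeries

theorem lagA_zero (b : ℕ → ℝ) : lagA b 0 = 0 := if_pos rfl

theorem lagA_nonneg {b : ℕ → ℝ} (hb : ∀ n, 0 ≤ b n) (n : ℕ) : 0 ≤ lagA b n := by
  unfold lagA
  split_ifs
  · rfl
  · exact mul_nonneg (by positivity) (coeff_pow_nonneg (by simpa using hb) _ _)

theorem mk_lagA_eq_X_mul_subst {b : ℕ → ℝ} (hb0 : b 0 ≠ 0) :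
    mk (lagA b) = X * (mk b).subst (mk (lagA b)) := by
  obtain ⟨G, hG⟩ := exists_eq_X_mul_subst (F := mk b) (by simpa using hb0)
  suffices mk (lagA b) = G by rwa [this]
  ext n
  rcases n with _ | k
  · rw [coeff_mk, lagA_zero, coeff_zero_eq_constantCoeff_apply, hG]
    simp
  · have h := lagrange_inversion_coeff_pow hG k le_rfl
    rw [pow_one, Nat.cast_one, one_mul, add_comm 1 k] at h
    rw [coeff_mk, lagA, if_neg k.succ_ne_zero, Nat.add_sub_cancel, ← h, inv_mul_cancel_left₀]
    positivity

section Psi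

variable {b : ℕ → ℝ} {x y : ℝ}

theorem summable_mul_pow_of_le (hb : ∀ n, 0 ≤ b n) (hx : 0 ≤ x) (hxy : x ≤ y)
    (hy : Summable fun n => b n * y ^ n) : Summable fun n => b n * x ^ n :=
  hy.of_nonneg_of_le (fun n => mul_nonneg (hb n) (pow_nonneg hx n))
    (fun n => mul_le_mul_of_nonneg_left (pow_le_pow_left₀ hx hxy n) (hb n))

theorem psi_le_psi (hb : ∀ n, 0 ≤ b n) (hx : 0 ≤ x) (hxy : x ≤ y)
    (hy : Summable fun n => b n * y ^ n) : psi b x ≤ psi b y :=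
  (summable_mul_pow_of_le hb hx hxy hy).tsum_le_tsum
    (fun n => mul_le_mul_of_nonneg_left (pow_le_pow_left₀ hx hxy n) (hb n)) hy

theorem psi_pos (hb : ∀ n, 0 ≤ b n) (hb0 : 0 < b 0) (hx : 0 ≤ x)
    (hs : Summable fun n => b n * x ^ n) : 0 < psi b x := by
  have h0 : b 0 * x ^ 0 ≤ psi b x :=
    hs.le_tsum 0 fun j _ => mul_nonneg (hb j) (pow_nonneg hx j)
  simpa using hb0.trans_le (by simpa using h0)

end Psi

section Supersolution

variable {b : ℕ → ℝ} {w y : ℝ}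

theorem sum_range_succ_lagA_mul_pow_le (hb : ∀ n, 0 ≤ b n) (hb0 : b 0 ≠ 0) (hw : 0 ≤ w) (N : ℕ)
    (hS : Summable fun n => b n * (∑ k ∈ range N, lagA b k * w ^ k) ^ n) :
    ∑ n ∈ range (N + 1), lagA b n * w ^ n ≤ w * psi b (∑ n ∈ range N, lagA b n * w ^ n) := by
  have hG := mk_lagA_eq_X_mul_subst hb0
  set P : ℝ⟦X⟧ := (trunc N (mk (lagA b)) : ℝ⟦X⟧)
  have hcoeffP : ∀ n, coeff n P = if n < N then lagA b n else 0 := fun n => by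
    simp [P, coeff_trunc]
  have hP0 : constantCoeff P = 0 := by
    rw [← coeff_zero_eq_constantCoeff_apply, hcoeffP, lagA_zero, ite_self]
  have hPnn : ∀ n, 0 ≤ coeff n P := fun n => by
    rw [hcoeffP]
    split_ifs
    exacts [lagA_nonneg hb n, le_rfl]
  have hP : HasSum (fun n => coeff n P * w ^ n) (∑ n ∈ range N, lagA b n * w ^ n) := by
    have hsum : ∑ n ∈ range N, lagA b n * w ^ n = ∑ n ∈ range N, coeff n P * w ^ n :=
      sum_congr rfl fun n hn => by rw [hcoeffP, if_pos (mem_range.1 hn)]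
    rw [hsum]
    exact hasSum_sum_of_ne_finset_zero fun n hn => by
      rw [hcoeffP, if_neg (by simpa using hn), zero_mul]
  have hXnn : ∀ n, 0 ≤ coeff n (X * (mk b).subst P) * w ^ n := fun n => by
    refine mul_nonneg ?_ (pow_nonneg hw n)
    rcases n with _ | k
    · simp
    · rw [coeff_succ_X_mul]
      exact coeff_subst_nonneg (by simpa using hb) hP0 hPnn k
  calc ∑ n ∈ range (N + 1), lagA b n * w ^ n
      = ∑ n ∈ range (N + 1), coeff n (X * (mk b).subst P) * w ^ n := by
        refine sum_congr rfl fun n hn => ?_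
        rw [coeff_X_mul_subst_trunc hG (Nat.lt_succ_iff.1 (mem_range.1 hn)), coeff_mk]
    _ ≤ w * psi b (∑ n ∈ range N, lagA b n * w ^ n) :=
        sum_le_hasSum _ (fun n _ => hXnn n)
          (hasSum_coeff_X_mul_mul_pow (hasSum_coeff_subst_mul_pow hb hP0 hPnn hw hP hS))

theorem sum_range_lagA_mul_pow_le (hb : ∀ n, 0 ≤ b n) (hb0 : b 0 ≠ 0) (hw : 0 ≤ w)
    (hy0 : 0 ≤ y) (hy : Summable fun n => b n * y ^ n) (hwy : w * psi b y ≤ y) (N : ℕ) :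
    ∑ n ∈ range N, lagA b n * w ^ n ≤ y := by
  induction N with
  | zero => simpa using hy0
  | succ N ih =>
    have hS0 : 0 ≤ ∑ n ∈ range N, lagA b n * w ^ n :=
      sum_nonneg fun n _ => mul_nonneg (lagA_nonneg hb n) (pow_nonneg hw n)
    calc ∑ n ∈ range (N + 1), lagA b n * w ^ n
        ≤ w * psi b (∑ n ∈ range N, lagA b n * w ^ n) :=
          sum_range_succ_lagA_mul_pow_le hb hb0 hw N (summable_mul_pow_of_le hb hS0 ih hy)
      _ ≤ w * psi b y := mul_le_mul_of_nonneg_left (psi_le_psi hb hS0 ih hy) hw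
      _ ≤ y := hwy

theorem lagG_nonneg (hb : ∀ n, 0 ≤ b n) (hw : 0 ≤ w) : 0 ≤ lagG b w :=
  tsum_nonneg fun n => mul_nonneg (lagA_nonneg hb n) (pow_nonneg hw n)

theorem hasSum_lagA_mul_pow (hb : ∀ n, 0 ≤ b n) (hb0 : b 0 ≠ 0) (hw : 0 ≤ w)
    (hy0 : 0 ≤ y) (hy : Summable fun n => b n * y ^ n) (hwy : w * psi b y ≤ y) :
    HasSum (fun n => lagA b n * w ^ n) (lagG b w) :=
  (summable_of_sum_range_le (fun n => mul_nonneg (lagA_nonneg hb n) (pow_nonneg hw n))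
    (sum_range_lagA_mul_pow_le hb hb0 hw hy0 hy hwy)).hasSum

theorem lagG_le (hb : ∀ n, 0 ≤ b n) (hb0 : b 0 ≠ 0) (hw : 0 ≤ w)
    (hy0 : 0 ≤ y) (hy : Summable fun n => b n * y ^ n) (hwy : w * psi b y ≤ y) :
    lagG b w ≤ y :=
  Real.tsum_le_of_sum_range_le (fun n => mul_nonneg (lagA_nonneg hb n) (pow_nonneg hw n))
    (sum_range_lagA_mul_pow_le hb hb0 hw hy0 hy hwy)

theorem lagG_eq_mul_psi_lagG (hb : ∀ n, 0 ≤ b n) (hb0 : b 0 ≠ 0) (hw : 0 ≤ w)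
    (hy0 : 0 ≤ y) (hy : Summable fun n => b n * y ^ n) (hwy : w * psi b y ≤ y) :
    lagG b w = w * psi b (lagG b w) := by
  have hL : HasSum (fun n => coeff n (mk (lagA b)) * w ^ n) (lagG b w) := by
    simpa using hasSum_lagA_mul_pow hb hb0 hw hy0 hy hwy
  have hG0 : constantCoeff (mk (lagA b)) = 0 := by simp [lagA_zero]
  have hXG := hasSum_coeff_X_mul_mul_pow (hasSum_coeff_subst_mul_pow hb hG0
    (by simpa using lagA_nonneg hb) hw hL
    (summable_mul_pow_of_le hb (lagG_nonneg hb hw) (lagG_le hb hb0 hw hy0 hy hwy) hy))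
  rw [← mk_lagA_eq_X_mul_subst hb0] at hXG
  exact hL.unique hXG

end Supersolution

theorem extq_eq_lagG_div {b : ℕ → ℝ} {R t : ℝ} (hb : ∀ n, 0 ≤ b n) (hb0 : 0 < b 0)
    (hconv : ∀ x : ℝ, 0 ≤ x → x < R → Summable fun n => b n * x ^ n) (ht0 : 0 < t) (htR : t < R) :
    extq b t = lagG b (t / psi b t) / t := by
  have hψt : 0 < psi b t := psi_pos hb hb0 ht0.le (hconv t ht0.le htR)
  set w := t / psi b t
  have hw : 0 ≤ w := (div_pos ht0 hψt).le
  have hwψ : w * psi b t = t := div_mul_cancel₀ t hψt.ne'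
  have hL := lagG_eq_mul_psi_lagG hb hb0.ne' hw ht0.le (hconv t ht0.le htR) hwψ.le
  refine IsLeast.csInf_eq ⟨⟨div_nonneg (lagG_nonneg hb hw) ht0.le, ?_⟩, fun x ⟨hx0, hx⟩ => ?_⟩
  · rw [mul_div_cancel₀ _ ht0.ne', div_mul_eq_mul_div, eq_div_iff ht0.ne']
    conv_rhs => rw [hL]
    rw [mul_right_comm, hwψ, mul_comm]
  rcases le_or_gt x 1 with hx1 | hx1
  · rw [div_le_iff₀ ht0, mul_comm]
    exact lagG_le hb hb0.ne' hw (mul_nonneg ht0.le hx0)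
      (hconv _ (mul_nonneg ht0.le hx0) (by nlinarith)) (by rw [hx, mul_left_comm, hwψ, mul_comm])
  · exact ((div_le_one ht0).2 (lagG_le hb hb0.ne' hw ht0.le (hconv t ht0.le htR) hwψ.le)).trans
      hx1.le

theorem stmt_13_general
    (b : ℕ → ℝ) (R : ℝ)
    (hnn : ∀ n, 0 ≤ b n) (hb0 : 0 < b 0)
    (hconv : ∀ t : ℝ, 0 ≤ t → t < R → Summable fun n => b n * t ^ n)
    (t : ℝ) (ht : t ∈ Set.Ioo 0 R) :
    extq b t = ∑' n : ℕ, lagA b (n + 1) * t ^ n / psi b t ^ (n + 1) ∧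
    extq b t = lagG b (t / psi b t) / t := by
  obtain ⟨ht0, htR⟩ := ht
  have hq := extq_eq_lagG_div hnn hb0 hconv ht0 htR
  refine ⟨?_, hq⟩
  have hψt : 0 < psi b t := psi_pos hnn hb0 ht0.le (hconv t ht0.le htR)
  have hL := hasSum_lagA_mul_pow hnn hb0.ne' (div_pos ht0 hψt).le ht0.le (hconv t ht0.le htR)
    (div_mul_cancel₀ t hψt.ne').le
  have hshift := ((hasSum_nat_add_iff' 1).2 hL).div_const t
  simp only [range_one, sum_singleton, lagA_zero, zero_mul, sub_zero] at hshift
  rw [hq, ← hshift.tsum_eq]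
  refine tsum_congr fun n => ?_
  rw [div_pow, pow_succ t]
  field_simp

theorem stmt_13
    (b : ℕ → ℝ) (R : ℝ) (hR : 0 < R)
    (hnn : ∀ n, 0 ≤ b n) (hb0 : 0 < b 0)
    (hnc : ∃ n, 1 ≤ n ∧ b n ≠ 0)
    (hconv : ∀ t : ℝ, 0 ≤ t → t < R → Summable fun n => b n * t ^ n)
    (t : ℝ) (ht : t ∈ Set.Ioo 0 R) :
    extq b t = ∑' n : ℕ, lagA b (n + 1) * t ^ n / psi b t ^ (n + 1) ∧
    extq b t = lagG b (t / psi b t) / t :=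
  stmt_13_general b R hnn hb0 hconv t ht
end

section
/- Let ψ ∈ 𝒦 with radius R_ψ and suppose lim_{t↑R_ψ} ψ(t)/t = +∞. Then the extinction probability q(t) of the Galton–Watson process with offspring distribution Y_t satisfies q(t) ~ ψ(0)/ψ(t) as t ↑ R_ψ, i.e. lim_{t↑R_ψ} q(t)ψ(t)/ψ(0) = 1. -/
open Set Filter Topology

/-!
The extinction probability `q = q(t)` is a fixed point of `x ↦ ψ(tx)/ψ(t)`, so
`q ψ(t) = ψ(tq) ≥ ψ(0)`. Conversely, once `ψ(t) ≥ 2ψ(R/2)` the intermediate value theorem gives a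
fixed point in `[0, 1/2]`, so the least one satisfies `q ≤ 1/2`. Since `x ↦ (ψ(x) - ψ(0))/x`
increases, `ψ(tq) - ψ(0) ≤ 2q (ψ(t/2) - ψ(0))`, i.e. `q ψ(t) ≤ ψ(0) + 2q ψ(R/2)`.
Hence `q = O(1/ψ(t)) → 0` and then `q ψ(t) → ψ(0)`.
-/

variable {b : ℕ → ℝ} {R : ℝ}

theorem psi_zero (b : ℕ → ℝ) : psi b 0 = b 0 := by
  rw [psi, tsum_eq_single 0 fun n hn => by simp [zero_pow hn]]
  simp

theorem psi_mono (hnn : ∀ n, 0 ≤ b n)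
    (hconv : ∀ t : ℝ, 0 ≤ t → t < R → Summable fun n => b n * t ^ n)
    {x y : ℝ} (hx : 0 ≤ x) (hxy : x ≤ y) (hyR : y < R) : psi b x ≤ psi b y :=
  (hconv x hx (hxy.trans_lt hyR)).tsum_le_tsum
    (fun n => mul_le_mul_of_nonneg_left (pow_le_pow_left₀ hx hxy n) (hnn n))
    (hconv y (hx.trans hxy) hyR)

theorem continuousOn_psi (hnn : ∀ n, 0 ≤ b n)
    (hconv : ∀ t : ℝ, 0 ≤ t → t < R → Summable fun n => b n * t ^ n)
    {s : ℝ} (hs : 0 ≤ s) (hsR : s < R) : ContinuousOn (psi b) (Icc 0 s) :=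
  continuousOn_tsum (fun n => (continuous_const.mul (continuous_pow n)).continuousOn)
    (hconv s hs hsR) fun n x hx => by
      rw [norm_mul, norm_pow, Real.norm_of_nonneg (hnn n), Real.norm_of_nonneg hx.1]
      exact mul_le_mul_of_nonneg_left (pow_le_pow_left₀ hx.1 hx.2 n) (hnn n)

theorem continuousOn_psi_mul (hnn : ∀ n, 0 ≤ b n)
    (hconv : ∀ t : ℝ, 0 ≤ t → t < R → Summable fun n => b n * t ^ n)
    {t : ℝ} (ht : 0 ≤ t) (htR : t < R) :
    ContinuousOn (fun x => psi b (t * x)) (Icc 0 1) :=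
  (continuousOn_psi hnn hconv ht htR).comp (by fun_prop) fun _ hx =>
    ⟨mul_nonneg ht hx.1, mul_le_of_le_one_right ht hx.2⟩

theorem mul_psi_sub_le (hnn : ∀ n, 0 ≤ b n)
    (hconv : ∀ t : ℝ, 0 ≤ t → t < R → Summable fun n => b n * t ^ n)
    {x s : ℝ} (hx : 0 ≤ x) (hxs : x ≤ s) (hsR : s < R) :
    s * (psi b x - b 0) ≤ x * (psi b s - b 0) := by
  have hxR := hxs.trans_lt hsR
  have hs := hx.trans hxs
  have tail : ∀ y, 0 ≤ y → y < R → psi b y - b 0 = ∑' n, b (n + 1) * y ^ (n + 1) :=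
    fun y hy hyR => by rw [psi, (hconv y hy hyR).tsum_eq_zero_add]; simp
  have tail_summable : ∀ y, 0 ≤ y → y < R → Summable fun n => b (n + 1) * y ^ (n + 1) :=
    fun y hy hyR => (summable_nat_add_iff 1).mpr (hconv y hy hyR)
  rw [tail x hx hxR, tail s hs hsR, ← tsum_mul_left, ← tsum_mul_left]
  refine ((tail_summable x hx hxR).mul_left s).tsum_le_tsum (fun n => ?_)
    ((tail_summable s hs hsR).mul_left x)
  calc s * (b (n + 1) * x ^ (n + 1)) = b (n + 1) * (x * s) * x ^ n := by ring
    _ ≤ b (n + 1) * (x * s) * s ^ n :=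
      mul_le_mul_of_nonneg_left (pow_le_pow_left₀ hx hxs n) (mul_nonneg (hnn _) (mul_nonneg hx hs))
    _ = x * (b (n + 1) * s ^ (n + 1)) := by ring

theorem extq_le {t x : ℝ} (hx : 0 ≤ x) (hfix : psi b (t * x) = x * psi b t) : extq b t ≤ x :=
  csInf_le ⟨0, fun _ hy => hy.1⟩ ⟨hx, hfix⟩

theorem extq_mem (hnn : ∀ n, 0 ≤ b n)
    (hconv : ∀ t : ℝ, 0 ≤ t → t < R → Summable fun n => b n * t ^ n)
    {t : ℝ} (ht : 0 ≤ t) (htR : t < R) :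
    extq b t ∈ Icc 0 1 ∧ psi b (t * extq b t) = extq b t * psi b t := by
  set T := {x ∈ Icc (0 : ℝ) 1 | psi b (t * x) = x * psi b t}
  have hT : IsClosed T :=
    isClosed_Icc.isClosed_eq (continuousOn_psi_mul hnn hconv ht htR) (by fun_prop)
  have h1 : (1 : ℝ) ∈ T := ⟨⟨zero_le_one, le_rfl⟩, by simp⟩
  obtain ⟨hmin, hleast⟩ := hT.isLeast_csInf ⟨1, h1⟩ ⟨0, fun _ hx => hx.1.1⟩
  suffices extq b t = sInf T from this ▸ hmin
  refine le_antisymm (extq_le hmin.1.1 hmin.2) (le_csInf ⟨1, h1.1.1, h1.2⟩ fun x hx => ?_)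
  rcases le_or_gt x 1 with hx1 | hx1
  · exact hleast ⟨⟨hx.1, hx1⟩, hx.2⟩
  · exact hmin.1.2.trans hx1.le

theorem extq_le_of_psi_mul_le (hnn : ∀ n, 0 ≤ b n)
    (hconv : ∀ t : ℝ, 0 ≤ t → t < R → Summable fun n => b n * t ^ n)
    {t x : ℝ} (ht : 0 ≤ t) (htR : t < R) (hx : 0 ≤ x) (hx1 : x ≤ 1)
    (h : psi b (t * x) ≤ x * psi b t) : extq b t ≤ x := by
  have hg : ContinuousOn (fun y => psi b (t * y) - y * psi b t) (Icc 0 x) :=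
    ((continuousOn_psi_mul hnn hconv ht htR).mono (Icc_subset_Icc_right hx1)).sub (by fun_prop)
  obtain ⟨y, hy, hfix⟩ := intermediate_value_Icc' hx hg
    ⟨sub_nonpos.mpr h, by simpa [psi_zero] using hnn 0⟩
  exact (extq_le hy.1 (sub_eq_zero.mp hfix)).trans hy.2

theorem coeff_zero_le_psi (hnn : ∀ n, 0 ≤ b n)
    (hconv : ∀ t : ℝ, 0 ≤ t → t < R → Summable fun n => b n * t ^ n)
    {x : ℝ} (hx : 0 ≤ x) (hxR : x < R) : b 0 ≤ psi b x :=
  psi_zero b ▸ psi_mono hnn hconv le_rfl hx hxR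

theorem coeff_zero_le_extq_mul_psi (hnn : ∀ n, 0 ≤ b n)
    (hconv : ∀ t : ℝ, 0 ≤ t → t < R → Summable fun n => b n * t ^ n)
    {t : ℝ} (ht : 0 ≤ t) (htR : t < R) : b 0 ≤ extq b t * psi b t := by
  obtain ⟨hq, hfix⟩ := extq_mem hnn hconv ht htR
  rw [← hfix]
  exact coeff_zero_le_psi hnn hconv (mul_nonneg ht hq.1)
    ((mul_le_of_le_one_right ht hq.2).trans_lt htR)

theorem extq_mul_psi_le (hnn : ∀ n, 0 ≤ b n)
    (hconv : ∀ t : ℝ, 0 ≤ t → t < R → Summable fun n => b n * t ^ n)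
    {t : ℝ} (ht : 0 < t) (htR : t < R) (hq : extq b t ≤ 1 / 2) :
    extq b t * psi b t ≤ b 0 + 2 * extq b t * psi b (t / 2) := by
  obtain ⟨⟨hq0, -⟩, hfix⟩ := extq_mem hnn hconv ht.le htR
  have key := mul_psi_sub_le (s := t / 2) hnn hconv (mul_nonneg ht.le hq0) (by nlinarith)
    (by linarith)
  rw [hfix] at key
  have scaled : t / 2 * (extq b t * psi b t - b 0) ≤
      t / 2 * (2 * extq b t * (psi b (t / 2) - b 0)) := by
    linarith
  have := le_of_mul_le_mul_left scaled (by positivity)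
  nlinarith [mul_nonneg hq0 (hnn 0)]

theorem tendsto_extq_mul_psi (hnn : ∀ n, 0 ≤ b n)
    (hconv : ∀ t : ℝ, 0 ≤ t → t < R → Summable fun n => b n * t ^ n)
    (hR : 0 < R) (hψ : Tendsto (psi b) (𝓝[<] R) atTop) :
    Tendsto (fun t => extq b t * psi b t) (𝓝[<] R) (𝓝 (b 0)) := by
  set M := psi b (R / 2)
  have hbounds : ∀ᶠ t in 𝓝[<] R, 0 ≤ extq b t ∧ extq b t ≤ (b 0 + M) / psi b t ∧
      b 0 ≤ extq b t * psi b t ∧ extq b t * psi b t ≤ b 0 + 2 * M * extq b t := by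
    filter_upwards [Ioo_mem_nhdsLT hR, hψ.eventually_ge_atTop (2 * M),
      hψ.eventually_gt_atTop 0] with t ⟨ht, htR⟩ hMt hψt
    have hhalf : psi b (t / 2) ≤ M := psi_mono hnn hconv (by positivity) (by linarith) (by linarith)
    have hq : extq b t ≤ 1 / 2 :=
      extq_le_of_psi_mul_le hnn hconv ht.le htR (by norm_num) (by norm_num)
        (by rw [mul_one_div]; linarith)
    have hq0 := (extq_mem hnn hconv ht.le htR).1.1
    have hM0 : 0 ≤ M := (hnn 0).trans (coeff_zero_le_psi hnn hconv (by positivity) (by linarith))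
    have hup := extq_mul_psi_le hnn hconv ht htR hq
    refine ⟨hq0, ?_, coeff_zero_le_extq_mul_psi hnn hconv ht.le htR, by nlinarith⟩
    rw [le_div_iff₀ hψt]
    nlinarith
  have hextq : Tendsto (extq b) (𝓝[<] R) (𝓝 0) :=
    tendsto_of_tendsto_of_tendsto_of_le_of_le' tendsto_const_nhds
      (hψ.const_div_atTop _) (hbounds.mono fun _ h => h.1) (hbounds.mono fun _ h => h.2.1)
  have hupper : Tendsto (fun t => b 0 + 2 * M * extq b t) (𝓝[<] R) (𝓝 (b 0)) := by
    simpa using (hextq.const_mul (2 * M)).const_add (b 0)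
  exact tendsto_of_tendsto_of_tendsto_of_le_of_le' tendsto_const_nhds hupper
    (hbounds.mono fun _ h => h.2.2.1) (hbounds.mono fun _ h => h.2.2.2)

theorem stmt_16_general
    (b : ℕ → ℝ) (R : ℝ) (hR : 0 < R)
    (hnn : ∀ n, 0 ≤ b n) (hb0 : 0 < b 0)
    (hconv : ∀ t : ℝ, 0 ≤ t → t < R → Summable fun n => b n * t ^ n)
    (hinf : Filter.Tendsto (fun t => psi b t / t) (nhdsWithin R (Set.Iio R)) Filter.atTop) :
    Filter.Tendsto (fun t => extq b t * psi b t / psi b 0)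
      (nhdsWithin R (Set.Iio R)) (nhds 1) := by
  have hψ : Tendsto (psi b) (𝓝[<] R) atTop := by
    refine (hinf.atTop_mul_pos hR (tendsto_nhdsWithin_of_tendsto_nhds tendsto_id)).congr' ?_
    filter_upwards [Ioo_mem_nhdsLT hR] with t ht
    exact div_mul_cancel₀ _ ht.1.ne'
  simpa [psi_zero, hb0.ne'] using (tendsto_extq_mul_psi hnn hconv hR hψ).div_const (psi b 0)

theorem stmt_16
    (b : ℕ → ℝ) (R : ℝ) (hR : 0 < R)
    (hnn : ∀ n, 0 ≤ b n) (hb0 : 0 < b 0)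
    (hnc : ∃ n, 1 ≤ n ∧ b n ≠ 0)
    (hconv : ∀ t : ℝ, 0 ≤ t → t < R → Summable fun n => b n * t ^ n)
    (hinf : Filter.Tendsto (fun t => psi b t / t) (nhdsWithin R (Set.Iio R)) Filter.atTop) :
    Filter.Tendsto (fun t => extq b t * psi b t / psi b 0)
      (nhdsWithin R (Set.Iio R)) (nhds 1) :=
  stmt_16_general b R hR hnn hb0 hconv hinf
end
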